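/- arXiv:1310.1794 — 5 statements merged into one kernel-verified Lean document; each statement's English description precedes it below -/
import Mathlib

section
/- Let A, B be 3×3 real matrices with det A = det B = 1 and rank(A − B) = 1. Then for every λ ∈ [0,1], det(λA + (1−λ)B) = 1. -/
/-!
By the matrix determinant lemma, `t ↦ det (B + t • (A - B))` is affine in `t` when `A - B` has
rank one. It takes the same value at `t = 0` and `t = 1`, so it is constant.
-/

open Matrix

namespace Matrix

theorem exists_eq_vecMulVec_of_rank_le_one {K m n : Type*} [Field K] [Fintype m] [Fintype n]
    {C : Matrix m n K} (h : C.rank ≤ 1) : ∃ u : m → K, ∃ v : n → K, C = vecMulVec u v := by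
  rw [rank_eq_finrank_span_cols, Submodule.finrank_le_one_iff_isPrincipal] at h
  obtain ⟨u, hu⟩ := h
  have hcol (j : n) : ∃ c : K, c • u = C.col j := by
    rw [← Submodule.mem_span_singleton, ← hu]
    exact Submodule.subset_span ⟨j, rfl⟩
  choose v hv using hcol
  refine ⟨u, v, ext fun i j => ?_⟩
  rw [vecMulVec_apply, mul_comm, ← col_apply C j i, ← hv, Pi.smul_apply, smul_eq_mul]

section Det

variable {R n : Type*} [CommRing R] [Fintype n] [DecidableEq n]

theorem det_add_vecMulVec {B : Matrix n n R} (hB : IsUnit B.det) (u v : n → R) :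
    (B + vecMulVec u v).det = B.det * (1 + v ⬝ᵥ B⁻¹ *ᵥ u) := by
  have hfactor : B + vecMulVec u v = B * (1 + vecMulVec (B⁻¹ *ᵥ u) v) := by
    rw [Matrix.mul_add, Matrix.mul_one, mul_vecMulVec, mulVec_mulVec, mul_nonsing_inv B hB,
      one_mulVec]
  rw [hfactor, det_mul, vecMulVec_eq Unit, det_one_add_replicateCol_mul_replicateRow]

theorem det_add_smul_vecMulVec {B : Matrix n n R} (hB : IsUnit B.det) (u v : n → R) (t : R) :
    (B + t • vecMulVec u v).det = B.det * (1 + t * (v ⬝ᵥ B⁻¹ *ᵥ u)) := by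
  rw [← smul_vecMulVec, det_add_vecMulVec hB, mulVec_smul, dotProduct_smul, smul_eq_mul]

end Det

theorem det_smul_add_one_sub_smul_of_rank_sub_le_one {K n : Type*} [Field K] [Fintype n]
    [DecidableEq n] {A B : Matrix n n K} (hB : B.det ≠ 0) (hAB : A.det = B.det)
    (hrank : (A - B).rank ≤ 1) (l : K) : (l • A + (1 - l) • B).det = B.det := by
  obtain ⟨u, v, huv⟩ := exists_eq_vecMulVec_of_rank_le_one hrank
  have hline (t : K) : (B + t • (A - B)).det = B.det * (1 + t * (v ⬝ᵥ B⁻¹ *ᵥ u)) := by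
    rw [huv]
    exact det_add_smul_vecMulVec hB.isUnit u v t
  have hslope : v ⬝ᵥ B⁻¹ *ᵥ u = 0 := by
    have hA := hline 1
    rwa [one_smul, add_sub_cancel, hAB, one_mul, left_eq_mul₀ hB, add_eq_left] at hA
  have hcomb : l • A + (1 - l) • B = B + l • (A - B) := by module
  rw [hcomb, hline, hslope, mul_zero, add_zero, mul_one]

end Matrix

theorem det_convex_combination_of_rank_one
    (A B : Matrix (Fin 3) (Fin 3) ℝ)
    (hA : A.det = 1) (hB : B.det = 1)
    (hrank : (A - B).rank = 1) :
    ∀ l : ℝ, l ∈ Set.Icc (0 : ℝ) 1 → (l • A + (1 - l) • B).det = 1 := by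
  intro l _
  have hB0 : B.det ≠ 0 := hB ▸ one_ne_zero
  exact (det_smul_add_one_sub_smul_of_rank_sub_le_one hB0 (hA.trans hB.symm) hrank.le l).trans hB
end

section
/- Let E be a trace-free symmetric 3×3 real matrix with ordered eigenvalues μ₁(E) ≤ μ₂(E) ≤ μ₃(E). Define V(E) = min over unit vectors n ∈ S² of |E − U_n|², where U_n = (1/2)(3 n⊗n − I) and |·| is the Frobenius norm. Then V(E) = (μ₁(E) + 1/2)² + (μ₂(E) + 1/2)² + (μ₃(E) − 1)², and the minimum is attained when n is a unit eigenvector of E corresponding to the eigenvalue μ₃(E). -/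
/-!
For a unit vector `n` and `tr E = 0`, expanding the square gives
`|E - U_n|² = |E|² - 3 nᵀEn + 3/2`, because `|U_n|² = 3/2` and `⟨E, U_n⟩ = (3/2) nᵀEn`.
In the orthonormal eigenbasis `|E|² = ∑ μᵢ²` and `nᵀEn = ∑ μᵢ cᵢ²` with `∑ cᵢ² = 1`, so
`nᵀEn ≤ μ₃`, with equality at `n = v₃`. Since `∑ μᵢ = 0`, the minimum `∑ μᵢ² - 3μ₃ + 3/2`
is the claimed value.
-/

open Matrix

/-- `U_n = (1/2)(3 n⊗n − I)`. -/
noncomputable def Umat (n : Fin 3 → ℝ) : Matrix (Fin 3) (Fin 3) ℝ :=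
  (1 / 2 : ℝ) • ((3 : ℝ) • Matrix.vecMulVec n n - 1)

/-- Squared Frobenius distance of `E` to `U_n`. -/
noncomputable def distSqU (E : Matrix (Fin 3) (Fin 3) ℝ) (n : Fin 3 → ℝ) : ℝ :=
  ∑ i, ∑ j, (E i j - Umat n i j) ^ 2

namespace Matrix

variable {ι : Type*} [Fintype ι] [DecidableEq ι]

theorem mem_orthogonalGroup_of_dotProduct_rows {v : ι → ι → ℝ}
    (hv : ∀ i j, v i ⬝ᵥ v j = if i = j then 1 else 0) : of v ∈ orthogonalGroup ι ℝ := by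
  rw [mem_orthogonalGroup_iff]
  ext i j
  simpa [mul_apply, one_apply, dotProduct] using hv i j

theorem eq_transpose_mul_diagonal_mul_of_mulVec_eq {E V : Matrix ι ι ℝ} {μ : ι → ℝ}
    (hV : V ∈ orthogonalGroup ι ℝ) (heig : ∀ i, E *ᵥ V i = μ i • V i) :
    E = Vᵀ * diagonal μ * V := by
  have hcols : E * Vᵀ = Vᵀ * diagonal μ := by
    ext k i
    rw [mul_diagonal, transpose_apply, mul_comm]
    simpa [mul_apply, mulVec, dotProduct] using congrFun (heig i) k
  calc E = E * Vᵀ * V := by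
        rw [Matrix.mul_assoc, (mem_orthogonalGroup_iff' ι ℝ).1 hV, Matrix.mul_one]
    _ = Vᵀ * diagonal μ * V := by rw [hcols]

variable {V : Matrix ι ι ℝ}

theorem trace_transpose_mul_diagonal_mul (hV : V ∈ orthogonalGroup ι ℝ) (μ : ι → ℝ) :
    trace (Vᵀ * diagonal μ * V) = ∑ i, μ i := by
  rw [trace_mul_comm, ← Matrix.mul_assoc, (mem_orthogonalGroup_iff ι ℝ).1 hV, Matrix.one_mul,
    trace_diagonal]

theorem sum_sq_transpose_mul_diagonal_mul (hV : V ∈ orthogonalGroup ι ℝ) (μ : ι → ℝ) :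
    ∑ k, ∑ l, (Vᵀ * diagonal μ * V) k l ^ 2 = ∑ i, μ i ^ 2 := by
  have hVVt := (mem_orthogonalGroup_iff ι ℝ).1 hV
  have hsq : ∀ A : Matrix ι ι ℝ, ∑ k, ∑ l, A k l ^ 2 = trace (A * Aᵀ) := fun A => by
    simp [trace, mul_apply, sq]
  rw [hsq, transpose_mul, transpose_mul, transpose_transpose, diagonal_transpose]
  calc trace (Vᵀ * diagonal μ * V * (Vᵀ * (diagonal μ * V)))
      = trace (Vᵀ * (diagonal μ * (V * Vᵀ) * diagonal μ) * V) := by simp only [Matrix.mul_assoc]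
    _ = trace (diagonal fun i => μ i ^ 2) := by
      rw [trace_mul_comm, ← Matrix.mul_assoc, hVVt, Matrix.one_mul, Matrix.mul_one,
        diagonal_mul_diagonal]
      simp [sq]
    _ = ∑ i, μ i ^ 2 := trace_diagonal _

theorem dotProduct_transpose_mul_diagonal_mul_mulVec (V : Matrix ι ι ℝ) (μ x : ι → ℝ) :
    x ⬝ᵥ (Vᵀ * diagonal μ * V) *ᵥ x = ∑ i, μ i * (V *ᵥ x) i ^ 2 := by
  rw [← mulVec_mulVec, ← mulVec_mulVec, dotProduct_mulVec, vecMul_transpose]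
  simp only [dotProduct, mulVec_diagonal]
  exact Finset.sum_congr rfl fun i _ => by ring

theorem sum_sq_mulVec (hV : V ∈ orthogonalGroup ι ℝ) (x : ι → ℝ) :
    ∑ i, (V *ᵥ x) i ^ 2 = ∑ i, x i ^ 2 := by
  have h := dotProduct_transpose_mul_diagonal_mul_mulVec V (fun _ => 1) x
  rw [diagonal_one, Matrix.mul_one, (mem_orthogonalGroup_iff' ι ℝ).1 hV, one_mulVec] at h
  simpa [dotProduct, sq] using h.symm

end Matrix

theorem Finset.sum_mul_sq_le_of_le {ι : Type*} (s : Finset ι) {μ : ι → ℝ} {M : ℝ}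
    (h : ∀ i ∈ s, μ i ≤ M) (c : ι → ℝ) : ∑ i ∈ s, μ i * c i ^ 2 ≤ M * ∑ i ∈ s, c i ^ 2 := by
  rw [Finset.mul_sum]
  exact Finset.sum_le_sum fun i hi => mul_le_mul_of_nonneg_right (h i hi) (sq_nonneg _)

theorem distSqU_eq_of_trace_eq_zero {E : Matrix (Fin 3) (Fin 3) ℝ} (htr : E.trace = 0)
    {n : Fin 3 → ℝ} (hn : ∑ i, n i ^ 2 = 1) :
    distSqU E n = ∑ k, ∑ l, E k l ^ 2 - 3 * (n ⬝ᵥ E *ᵥ n) + 3 / 2 := by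
  simp only [trace, diag, Fin.sum_univ_three] at htr hn
  simp only [distSqU, Umat, one_div, Matrix.smul_apply, Matrix.sub_apply, vecMulVec_apply,
    smul_eq_mul, one_apply, Fin.sum_univ_three, Fin.isValue, ↓reduceIte, zero_ne_one, sub_zero,
    Fin.reduceEq, one_ne_zero, dotProduct, mulVec]
  linear_combination htr + ((9/4) * (n 0^2 + n 1^2 + n 2^2 + 1) - 3/2) * hn

theorem min_dist_to_wells_general
    (E : Matrix (Fin 3) (Fin 3) ℝ) (htr : E.trace = 0)
    (μ : Fin 3 → ℝ) (v : Fin 3 → (Fin 3 → ℝ))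
    (hmono : Monotone μ)
    (hortho : ∀ i j, (∑ k, v i k * v j k) = if i = j then (1 : ℝ) else 0)
    (heig : ∀ i, E *ᵥ v i = μ i • v i) :
    IsLeast {x : ℝ | ∃ n : Fin 3 → ℝ, (∑ i, (n i) ^ 2) = 1 ∧ x = distSqU E n}
      ((μ 0 + 1 / 2) ^ 2 + (μ 1 + 1 / 2) ^ 2 + (μ 2 - 1) ^ 2) ∧
    distSqU E (v 2) = (μ 0 + 1 / 2) ^ 2 + (μ 1 + 1 / 2) ^ 2 + (μ 2 - 1) ^ 2 := by
  have hV : of v ∈ orthogonalGroup (Fin 3) ℝ := mem_orthogonalGroup_of_dotProduct_rows hortho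
  have hEV : E = (of v)ᵀ * diagonal μ * of v := eq_transpose_mul_diagonal_mul_of_mulVec_eq hV heig
  have hμ : μ 0 + μ 1 + μ 2 = 0 := by
    simpa [hEV, trace_transpose_mul_diagonal_mul hV, Fin.sum_univ_three] using htr
  have hdist : ∀ n : Fin 3 → ℝ, ∑ i, n i ^ 2 = 1 →
      distSqU E n = ∑ i, μ i ^ 2 - 3 * ∑ i, μ i * (of v *ᵥ n) i ^ 2 + 3 / 2 := fun n hn => by
    rw [distSqU_eq_of_trace_eq_zero htr hn, hEV, sum_sq_transpose_mul_diagonal_mul hV,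
      dotProduct_transpose_mul_diagonal_mul_mulVec]
  have htarget : (μ 0 + 1 / 2) ^ 2 + (μ 1 + 1 / 2) ^ 2 + (μ 2 - 1) ^ 2
      = ∑ i, μ i ^ 2 - 3 * μ 2 + 3 / 2 := by
    rw [Fin.sum_univ_three]
    linear_combination hμ
  have hv2_unit : ∑ i, v 2 i ^ 2 = 1 := by simpa [sq] using hortho 2 2
  have hv2 : distSqU E (v 2) = (μ 0 + 1 / 2) ^ 2 + (μ 1 + 1 / 2) ^ 2 + (μ 2 - 1) ^ 2 := by
    have hcoord : of v *ᵥ v 2 = Pi.single 2 1 := by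
      ext i
      simpa [mulVec, dotProduct, Pi.single_apply] using hortho i 2
    rw [hdist _ hv2_unit, hcoord, htarget]
    simp [Fin.sum_univ_three]
  refine ⟨⟨⟨v 2, hv2_unit, hv2.symm⟩, ?_⟩, hv2⟩
  rintro _ ⟨n, hn, rfl⟩
  have hrayleigh := Finset.univ.sum_mul_sq_le_of_le (M := μ 2) (fun i _ => hmono (Fin.le_last i))
    (of v *ᵥ n)
  rw [sum_sq_mulVec hV, hn] at hrayleigh
  rw [hdist n hn, htarget]
  linarith

theorem min_dist_to_wells
    (E : Matrix (Fin 3) (Fin 3) ℝ) (hE : E.IsSymm) (htr : E.trace = 0)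
    (μ : Fin 3 → ℝ) (v : Fin 3 → (Fin 3 → ℝ))
    (hmono : Monotone μ)
    (hortho : ∀ i j, (∑ k, v i k * v j k) = if i = j then (1 : ℝ) else 0)
    (heig : ∀ i, E *ᵥ v i = μ i • v i) :
    IsLeast {x : ℝ | ∃ n : Fin 3 → ℝ, (∑ i, (n i) ^ 2) = 1 ∧ x = distSqU E n}
      ((μ 0 + 1 / 2) ^ 2 + (μ 1 + 1 / 2) ^ 2 + (μ 2 - 1) ^ 2) ∧
    distSqU E (v 2) = (μ 0 + 1 / 2) ^ 2 + (μ 1 + 1 / 2) ^ 2 + (μ 2 - 1) ^ 2 :=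
  min_dist_to_wells_general E htr μ v hmono hortho heig
end

section
/- For r > 0, define on B(0,r) \ {0} ⊂ ℝ² the map ũ(x₁,x₂) = (3/4)·log((x₁² + x₂²)/r²)·(−x₂, x₁). Then at every point of B(0,r)\{0}, (∂_{x₁}ũ₁)² + ((∂_{x₁}ũ₂ + ∂_{x₂}ũ₁)/2)² = 9/16. -/
/-!
Write `ũ = φ · (-x₂, x₁)` with `φ = c log(|x|²/r²)`, so `∇φ = 2c x/|x|²`. The term `φ` only
contributes a skew part to `∇ũ`, hence the strain sees only `∇φ`: in polar angle `θ`,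
`∂₁ũ₁ = -c sin 2θ` and `(∂₁ũ₂ + ∂₂ũ₁)/2 = c cos 2θ`, whose squares add up to `c² = 9/16`.
-/

open ContinuousLinearMap

theorem fst_sq_add_snd_sq_ne_zero {p : ℝ × ℝ} (hp : p ≠ 0) : p.1 ^ 2 + p.2 ^ 2 ≠ 0 := by
  contrapose! hp
  ext <;> simp <;> nlinarith [sq_nonneg p.1, sq_nonneg p.2]

theorem hasFDerivAt_mul_log_sq_add_sq_div {c r : ℝ} {p : ℝ × ℝ} (hr : r ≠ 0) (hp : p ≠ 0) :
    HasFDerivAt (fun q : ℝ × ℝ => c * Real.log ((q.1 ^ 2 + q.2 ^ 2) / r ^ 2))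
      ((2 * c / (p.1 ^ 2 + p.2 ^ 2)) • (p.1 • fst ℝ ℝ ℝ + p.2 • snd ℝ ℝ ℝ)) p := by
  have hs := fst_sq_add_snd_sq_ne_zero hp
  have hsum : HasFDerivAt (fun q : ℝ × ℝ => (q.1 ^ 2 + q.2 ^ 2) * (r ^ 2)⁻¹) _ p :=
    (((hasFDerivAt_fst (𝕜 := ℝ) (p := p)).pow 2).add
      ((hasFDerivAt_snd (𝕜 := ℝ) (p := p)).pow 2)).mul_const _
  have hne : (p.1 ^ 2 + p.2 ^ 2) * (r ^ 2)⁻¹ ≠ 0 := mul_ne_zero hs (by positivity)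
  have h := (hsum.log hne).const_mul c
  simp only [← div_eq_mul_inv] at h
  refine h.congr_fderiv ?_
  ext <;> simp <;> field_simp

theorem fderiv_mul_neg_snd_apply_one_zero {φ : ℝ × ℝ → ℝ} {L : ℝ × ℝ →L[ℝ] ℝ} {p : ℝ × ℝ}
    (hφ : HasFDerivAt φ L p) :
    fderiv ℝ (fun q : ℝ × ℝ => φ q * -q.2) p (1, 0) = -p.2 * L (1, 0) := by
  have h : HasFDerivAt (fun q : ℝ × ℝ => φ q * -q.2) _ p := hφ.mul hasFDerivAt_snd.neg
  rw [h.fderiv]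
  simp

theorem fderiv_mul_fst_apply_add_fderiv_mul_neg_snd_apply {φ : ℝ × ℝ → ℝ}
    {L : ℝ × ℝ →L[ℝ] ℝ} {p : ℝ × ℝ} (hφ : HasFDerivAt φ L p) :
    fderiv ℝ (fun q : ℝ × ℝ => φ q * q.1) p (1, 0)
      + fderiv ℝ (fun q : ℝ × ℝ => φ q * -q.2) p (0, 1) = p.1 * L (1, 0) - p.2 * L (0, 1) := by
  have h₁ : HasFDerivAt (fun q : ℝ × ℝ => φ q * q.1) _ p := hφ.mul hasFDerivAt_fst
  have h₂ : HasFDerivAt (fun q : ℝ × ℝ => φ q * -q.2) _ p := hφ.mul hasFDerivAt_snd.neg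
  rw [h₁.fderiv, h₂.fderiv]
  simp
  ring

theorem sq_two_mul_div_add_sq_sub_div (x y : ℝ) (h : x ^ 2 + y ^ 2 ≠ 0) :
    (2 * x * y / (x ^ 2 + y ^ 2)) ^ 2 + ((x ^ 2 - y ^ 2) / (x ^ 2 + y ^ 2)) ^ 2 = 1 := by
  field_simp
  ring

theorem log_rotation_strain_sq_add_sq (c : ℝ) {r : ℝ} (hr : r ≠ 0) {p : ℝ × ℝ} (hp : p ≠ 0) :
    (fderiv ℝ (fun q : ℝ × ℝ => c * Real.log ((q.1 ^ 2 + q.2 ^ 2) / r ^ 2) * (-q.2)) p (1, 0)) ^ 2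
      + ((fderiv ℝ (fun q : ℝ × ℝ => c * Real.log ((q.1 ^ 2 + q.2 ^ 2) / r ^ 2) * q.1) p (1, 0)
          + fderiv ℝ (fun q : ℝ × ℝ => c * Real.log ((q.1 ^ 2 + q.2 ^ 2) / r ^ 2) * (-q.2)) p
            (0, 1)) / 2) ^ 2
      = c ^ 2 := by
  have hφ := hasFDerivAt_mul_log_sq_add_sq_div (c := c) hr hp
  rw [fderiv_mul_neg_snd_apply_one_zero hφ, fderiv_mul_fst_apply_add_fderiv_mul_neg_snd_apply hφ]
  have hs := fst_sq_add_snd_sq_ne_zero hp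
  obtain ⟨x, y⟩ := p
  simp only [smul_apply, add_apply, coe_fst', coe_snd', smul_eq_mul] at hs ⊢
  calc _ = c ^ 2 * ((2 * x * y / (x ^ 2 + y ^ 2)) ^ 2
      + ((x ^ 2 - y ^ 2) / (x ^ 2 + y ^ 2)) ^ 2) := by field_simp; ring
    _ = c ^ 2 := by rw [sq_two_mul_div_add_sq_sub_div x y hs, mul_one]

/-- The symmetric gradient of the explicit map `ũ(x) = (3/4) log((x₁²+x₂²)/r²) (−x₂, x₁)`
lies pointwise on the zero-energy set: `(∂₁ũ₁)² + ((∂₁ũ₂ + ∂₂ũ₁)/2)² = 9/16`. -/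
theorem explicit_map_strain_on_wells (r : ℝ) (hr : 0 < r) :
    ∀ p : ℝ × ℝ, p ≠ 0 → Real.sqrt (p.1 ^ 2 + p.2 ^ 2) < r →
      (fderiv ℝ (fun q : ℝ × ℝ =>
          (3 / 4 : ℝ) * Real.log ((q.1 ^ 2 + q.2 ^ 2) / r ^ 2) * (-q.2)) p (1, 0)) ^ 2
      + ((fderiv ℝ (fun q : ℝ × ℝ =>
            (3 / 4 : ℝ) * Real.log ((q.1 ^ 2 + q.2 ^ 2) / r ^ 2) * q.1) p (1, 0)
          + fderiv ℝ (fun q : ℝ × ℝ =>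
            (3 / 4 : ℝ) * Real.log ((q.1 ^ 2 + q.2 ^ 2) / r ^ 2) * (-q.2)) p (0, 1)) / 2) ^ 2
      = 9 / 16 := by
  intro p hp _
  rw [log_rotation_strain_sq_add_sq _ hr.ne' hp]
  norm_num
end

section
/- Let φ : ℝ² \ {0} → ℝ be given by φ(x₁,x₂) = ψ(ρ²) with ρ² = x₁² + x₂² and ψ(t) = ±(3/8)(t log t − 1) + C₁ t + C₂. Then φ solves the fully nonlinear PDE (∂²_{x₁x₂}φ)² + ((∂²_{x₁²}φ − ∂²_{x₂²}φ)/2)² = 9/16 on ℝ² \ {0}. -/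
/-! For a radial function `φ(x) = ψ(|x|²)` the Hessian is `2ψ'(|x|²) I + 4ψ''(|x|²) x xᵀ`. The
multiple of the identity cancels in `∂₁₂φ` and in `(∂₁₁φ - ∂₂₂φ)/2`, which are `4ψ'' x₁x₂` and
`2ψ''(x₁² - x₂²)`; hence the left-hand side of the equation is `(2ψ''(ρ²) ρ²)²`. For
`ψ(t) = ±(3/8)(t log t - 1) + C₁t + C₂` one has `ψ''(t) = ±3/(8t)`, so this is `(3/4)² = 9/16`. -/

open ContinuousLinearMap Filter Topology

lemma hasFDerivAt_fst_sq_add_snd_sq (q : ℝ × ℝ) :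
    HasFDerivAt (fun z : ℝ × ℝ => z.1 ^ 2 + z.2 ^ 2)
      ((2 * q.1) • fst ℝ ℝ ℝ + (2 * q.2) • snd ℝ ℝ ℝ) q :=
  ((hasFDerivAt_fst.pow 2).add (hasFDerivAt_snd.pow 2)).congr_fderiv <| by
    ext <;> simp

lemma fst_sq_add_snd_sq_ne_zero_s9 {q : ℝ × ℝ} (hq : q ≠ 0) : q.1 ^ 2 + q.2 ^ 2 ≠ 0 := by
  contrapose! hq
  obtain ⟨h₁, h₂⟩ := (add_eq_zero_iff_of_nonneg (sq_nonneg _) (sq_nonneg _)).1 hq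
  exact Prod.ext (pow_eq_zero_iff two_ne_zero |>.1 h₁) (pow_eq_zero_iff two_ne_zero |>.1 h₂)

section Radial

variable {ψ ψ' : ℝ → ℝ}

lemma fderiv_radial_apply {d : ℝ} {q : ℝ × ℝ} (hψ : HasDerivAt ψ d (q.1 ^ 2 + q.2 ^ 2))
    (v : ℝ × ℝ) :
    fderiv ℝ (fun z : ℝ × ℝ => ψ (z.1 ^ 2 + z.2 ^ 2)) q v = d * (2 * (q.1 * v.1 + q.2 * v.2)) := by
  have h : HasFDerivAt (fun z : ℝ × ℝ => ψ (z.1 ^ 2 + z.2 ^ 2)) _ q :=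
    hψ.comp_hasFDerivAt q (hasFDerivAt_fst_sq_add_snd_sq q)
  rw [h.fderiv]
  simp only [smul_apply, add_apply, coe_fst', coe_snd', smul_eq_mul]
  ring

lemma fderiv_fderiv_radial_apply {ψ'' : ℝ} {p : ℝ × ℝ}
    (hψ : ∀ᶠ t in 𝓝 (p.1 ^ 2 + p.2 ^ 2), HasDerivAt ψ (ψ' t) t)
    (hψ' : HasDerivAt ψ' ψ'' (p.1 ^ 2 + p.2 ^ 2)) (v w : ℝ × ℝ) :
    fderiv ℝ (fun q => fderiv ℝ (fun z : ℝ × ℝ => ψ (z.1 ^ 2 + z.2 ^ 2)) q v) p w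
      = 2 * ψ' (p.1 ^ 2 + p.2 ^ 2) * (v.1 * w.1 + v.2 * w.2)
        + 4 * ψ'' * (p.1 * v.1 + p.2 * v.2) * (p.1 * w.1 + p.2 * w.2) := by
  have hfirst : (fun q => fderiv ℝ (fun z : ℝ × ℝ => ψ (z.1 ^ 2 + z.2 ^ 2)) q v)
      =ᶠ[𝓝 p] fun q => ψ' (q.1 ^ 2 + q.2 ^ 2) * (2 * (q.1 * v.1 + q.2 * v.2)) :=
    ((hasFDerivAt_fst_sq_add_snd_sq p).continuousAt.eventually hψ).mono
      fun q hq => fderiv_radial_apply hq v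
  have hlin : HasFDerivAt (fun q : ℝ × ℝ => 2 * (q.1 * v.1 + q.2 * v.2))
      (2 • (v.1 • fst ℝ ℝ ℝ + v.2 • snd ℝ ℝ ℝ)) p :=
    (((hasFDerivAt_fst.mul_const v.1).add (hasFDerivAt_snd.mul_const v.2)).const_mul 2).congr_fderiv
      (by ext <;> simp [mul_comm])
  have hsecond : HasFDerivAt (fun q => ψ' (q.1 ^ 2 + q.2 ^ 2) * (2 * (q.1 * v.1 + q.2 * v.2))) _ p :=
    (hψ'.comp_hasFDerivAt p (hasFDerivAt_fst_sq_add_snd_sq p)).fun_mul hlin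
  rw [hfirst.fderiv_eq, hsecond.fderiv]
  simp only [add_apply, smul_apply, coe_fst', coe_snd', smul_eq_mul, Function.comp_apply]
  ring

lemma radial_mixed_sq_add_half_diff_sq {ψ'' : ℝ} {p : ℝ × ℝ}
    (hψ : ∀ᶠ t in 𝓝 (p.1 ^ 2 + p.2 ^ 2), HasDerivAt ψ (ψ' t) t)
    (hψ' : HasDerivAt ψ' ψ'' (p.1 ^ 2 + p.2 ^ 2)) :
    (fderiv ℝ (fun q => fderiv ℝ (fun z : ℝ × ℝ => ψ (z.1 ^ 2 + z.2 ^ 2)) q (1, 0)) p (0, 1)) ^ 2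
      + ((fderiv ℝ (fun q => fderiv ℝ (fun z : ℝ × ℝ => ψ (z.1 ^ 2 + z.2 ^ 2)) q (1, 0)) p (1, 0)
          - fderiv ℝ (fun q => fderiv ℝ (fun z : ℝ × ℝ => ψ (z.1 ^ 2 + z.2 ^ 2)) q (0, 1)) p (0, 1))
          / 2) ^ 2
      = (2 * ψ'' * (p.1 ^ 2 + p.2 ^ 2)) ^ 2 := by
  simp only [fderiv_fderiv_radial_apply hψ hψ']
  ring

end Radial

lemma hasDerivAt_mul_log_sub_one_add_linear (c C₁ C₂ : ℝ) {t : ℝ} (ht : t ≠ 0) :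
    HasDerivAt (fun t => c * (t * Real.log t - 1) + C₁ * t + C₂) (c * (Real.log t + 1) + C₁) t := by
  simpa using ((((Real.hasDerivAt_mul_log ht).sub_const 1).const_mul c).add
    ((hasDerivAt_id t).const_mul C₁)).add_const C₂

lemma hasDerivAt_log_add_one_affine (c C₁ : ℝ) {t : ℝ} (ht : t ≠ 0) :
    HasDerivAt (fun t => c * (Real.log t + 1) + C₁) (c * t⁻¹) t := by
  simpa using (((Real.hasDerivAt_log ht).add_const 1).const_mul c).add_const C₁

/-- `φ(x) = ±(3/8)(ρ² log ρ² − 1) + C₁ρ² + C₂`, with `ρ² = x₁² + x₂²`, solves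
`(∂²₁₂φ)² + ((∂²₁₁φ − ∂²₂₂φ)/2)² = 9/16` away from the origin. -/
theorem radial_potential_solves_PDE (s C₁ C₂ : ℝ) (hs : s = 1 ∨ s = -1) :
    ∀ p : ℝ × ℝ, p ≠ 0 →
      (fderiv ℝ (fun q : ℝ × ℝ =>
          fderiv ℝ (fun z : ℝ × ℝ =>
            s * (3 / 8 : ℝ) * ((z.1 ^ 2 + z.2 ^ 2) * Real.log (z.1 ^ 2 + z.2 ^ 2) - 1)
              + C₁ * (z.1 ^ 2 + z.2 ^ 2) + C₂) q (1, 0)) p (0, 1)) ^ 2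
      + ((fderiv ℝ (fun q : ℝ × ℝ =>
            fderiv ℝ (fun z : ℝ × ℝ =>
              s * (3 / 8 : ℝ) * ((z.1 ^ 2 + z.2 ^ 2) * Real.log (z.1 ^ 2 + z.2 ^ 2) - 1)
                + C₁ * (z.1 ^ 2 + z.2 ^ 2) + C₂) q (1, 0)) p (1, 0)
          - fderiv ℝ (fun q : ℝ × ℝ =>
            fderiv ℝ (fun z : ℝ × ℝ =>
              s * (3 / 8 : ℝ) * ((z.1 ^ 2 + z.2 ^ 2) * Real.log (z.1 ^ 2 + z.2 ^ 2) - 1)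
                + C₁ * (z.1 ^ 2 + z.2 ^ 2) + C₂) q (0, 1)) p (0, 1)) / 2) ^ 2
      = 9 / 16 := by
  intro p hp
  have hρ := fst_sq_add_snd_sq_ne_zero_s9 hp
  have hψ : ∀ᶠ t in 𝓝 (p.1 ^ 2 + p.2 ^ 2), HasDerivAt
      (fun t => s * (3 / 8 : ℝ) * (t * Real.log t - 1) + C₁ * t + C₂)
      (s * (3 / 8 : ℝ) * (Real.log t + 1) + C₁) t :=
    eventually_of_mem (isOpen_ne.mem_nhds hρ) fun _ ht =>
      hasDerivAt_mul_log_sub_one_add_linear _ C₁ C₂ ht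
  rw [radial_mixed_sq_add_half_diff_sq hψ (hasDerivAt_log_add_one_affine _ C₁ hρ),
    mul_assoc, inv_mul_cancel_right₀ hρ]
  rcases hs with rfl | rfl <;> norm_num
end

section
/- Let A be a 3×3 trace-free real matrix whose symmetric part, in a suitable orthonormal basis, is diag(μ₂, μ₁, μ₃) with μ₁ ≤ μ₂ ≤ μ₃, μ₁ + μ₂ + μ₃ = 0, and μ₁ > −α for some α > 0, μ₃ < 2α. Set δ = √((α + μ₁)(α + μ₃)) and define A^± = diag-part plus entry ±2δ in position (2,3): A^± = [[μ₂,0,0],[0,μ₁,±2δ],[0,0,μ₃]]. Then A = (1/2)(A⁺ + skw A) + (1/2)(A⁻ + skw A), rank(A⁺ − A⁻) = 1, and the symmetric part of A^± + skw A has ordered eigenvalues (−α, μ₂, α − μ₂). -/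
/-! The symmetric part of `A^± + skw A` is the symmetric part of `A^±`, which is `diag(μ₂)` plus
the block `[[μ₁, ±δ], [±δ, μ₃]]`. Since `δ² = (α + μ₁)(α + μ₃)`, the value `-α` is a root of the
block's characteristic polynomial, and the trace `μ₁ + μ₃ = -μ₂` gives the other root `α - μ₂`.
The two matrices `A^±` differ only in the `(2,3)` entry, by `4δ ≠ 0`. -/

open Matrix Polynomial

namespace Matrix

theorem rank_single_of_ne_zero {K m n : Type*} [Field K] [Fintype n]
    [DecidableEq m] [DecidableEq n] (i : m) (j : n) {c : K} (hc : c ≠ 0) :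
    (single i j c).rank = 1 := by
  apply le_antisymm
  · have hvec : single i j c = vecMulVec (Pi.single i c) (Pi.single j 1) := by
      ext a b
      simp only [single_apply, vecMulVec_apply, Pi.single_apply]
      grind
    rw [hvec]
    exact rank_vecMulVec_le _ _
  · rw [Nat.one_le_iff_ne_zero]
    intro h
    rw [Matrix.rank, Submodule.finrank_eq_zero, LinearMap.range_eq_bot] at h
    have hij := congrArg (fun f => f (Pi.single j 1) i) h
    simp [hc] at hij

section SymmetricSkew

variable {K n : Type*} [Field K]

theorem half_smul_add_transpose_of_add_skew (A M : Matrix n n K) :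
    (1 / 2 : K) • ((M + (1 / 2 : K) • (A - Aᵀ)) + (M + (1 / 2 : K) • (A - Aᵀ))ᵀ)
      = (1 / 2 : K) • (M + Mᵀ) := by
  simp only [transpose_add, transpose_smul, transpose_sub, transpose_transpose]
  module

theorem eq_half_smul_add_of_add_eq_add_transpose [CharZero K] {A P Q : Matrix n n K}
    (h : P + Q = A + Aᵀ) :
    A = (1 / 2 : K) • (P + (1 / 2 : K) • (A - Aᵀ)) + (1 / 2 : K) • (Q + (1 / 2 : K) • (A - Aᵀ)) := by
  linear_combination (norm := module) (-(1 / 2 : K)) • h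

end SymmetricSkew

section FinThree

variable {R : Type*} [CommRing R]

theorem add_neg_upper_fin_three (a b c t : R) :
    !![a, 0, 0; 0, b, t; 0, 0, c] + !![a, 0, 0; 0, b, -t; 0, 0, c] = (2 : R) • diagonal ![a, b, c] := by
  rw [diagonal_vec3]
  ext i j
  fin_cases i <;> fin_cases j <;> simp <;> ring

theorem sub_neg_upper_fin_three (a b c t : R) :
    !![a, 0, 0; 0, b, t; 0, 0, c] - !![a, 0, 0; 0, b, -t; 0, 0, c] = single 1 2 (2 * t) := by
  ext i j
  fin_cases i <;> fin_cases j <;> simp [single]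
  ring

theorem half_smul_upper_add_transpose_fin_three {K : Type*} [Field K] [CharZero K] (a b c t : K) :
    (1 / 2 : K) • (!![a, 0, 0; 0, b, 2 * t; 0, 0, c] + (!![a, 0, 0; 0, b, 2 * t; 0, 0, c])ᵀ)
      = !![a, 0, 0; 0, b, t; 0, t, c] := by
  ext i j
  fin_cases i <;> fin_cases j <;> simp
  all_goals ring

theorem charpoly_fin_three_of_mul_self_eq {a b c d α : R}
    (hd : d * d = (α + b) * (α + c)) (hs : b + a + c = 0) :
    (!![a, 0, 0; 0, b, d; 0, d, c]).charpoly = (X + C α) * (X - C a) * (X - C (α - a)) := by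
  rw [charpoly, det_fin_three]
  simp [charmatrix]
  have hsC : (C b + C a + C c : R[X]) = 0 := by
    rw [← C_add, ← C_add, hs, C_0]
  have hdC : (C d * C d : R[X]) = (C α + C b) * (C α + C c) := by
    rw [← C_mul, ← C_add, ← C_add, ← C_mul, hd]
  linear_combination (-(X + C α)) * (X - C a) * hsC + (-(X - C a)) * hdC

end FinThree

end Matrix

theorem first_splitting_step_general
    (A : Matrix (Fin 3) (Fin 3) ℝ) (μ₁ μ₂ μ₃ α δ : ℝ)
    (hsym : (1 / 2 : ℝ) • (A + Aᵀ) = Matrix.diagonal ![μ₂, μ₁, μ₃])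
    (h12 : μ₁ ≤ μ₂) (h23 : μ₂ ≤ μ₃) (hsum : μ₁ + μ₂ + μ₃ = 0)
    (hμ1 : -α < μ₁)
    (hδ : δ = Real.sqrt ((α + μ₁) * (α + μ₃)))
    (Ap Am : Matrix (Fin 3) (Fin 3) ℝ)
    (hAp : Ap = !![μ₂, 0, 0; 0, μ₁, 2 * δ; 0, 0, μ₃])
    (hAm : Am = !![μ₂, 0, 0; 0, μ₁, -(2 * δ); 0, 0, μ₃]) :
    A = (1 / 2 : ℝ) • (Ap + (1 / 2 : ℝ) • (A - Aᵀ))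
        + (1 / 2 : ℝ) • (Am + (1 / 2 : ℝ) • (A - Aᵀ)) ∧
    (Ap - Am).rank = 1 ∧
    ((1 / 2 : ℝ) • ((Ap + (1 / 2 : ℝ) • (A - Aᵀ)) + (Ap + (1 / 2 : ℝ) • (A - Aᵀ))ᵀ)).charpoly
      = (X + C α) * (X - C μ₂) * (X - C (α - μ₂)) ∧
    ((1 / 2 : ℝ) • ((Am + (1 / 2 : ℝ) • (A - Aᵀ)) + (Am + (1 / 2 : ℝ) • (A - Aᵀ))ᵀ)).charpoly
      = (X + C α) * (X - C μ₂) * (X - C (α - μ₂)) := by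
  have hprod : 0 < (α + μ₁) * (α + μ₃) := mul_pos (by linarith) (by linarith)
  have hδsq : δ * δ = (α + μ₁) * (α + μ₃) := hδ ▸ Real.mul_self_sqrt hprod.le
  have hδ0 : δ ≠ 0 := hδ ▸ (Real.sqrt_pos.2 hprod).ne'
  have hAsym : A + Aᵀ = Ap + Am := by
    rw [hAp, hAm, add_neg_upper_fin_three, ← hsym, smul_smul]
    norm_num
  refine ⟨eq_half_smul_add_of_add_eq_add_transpose hAsym.symm, ?_, ?_, ?_⟩
  · rw [hAp, hAm, sub_neg_upper_fin_three]
    exact rank_single_of_ne_zero _ _ (by simp [hδ0])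
  · rw [half_smul_add_transpose_of_add_skew, hAp, half_smul_upper_add_transpose_fin_three]
    exact charpoly_fin_three_of_mul_self_eq hδsq hsum
  · rw [half_smul_add_transpose_of_add_skew, hAm, ← mul_neg, half_smul_upper_add_transpose_fin_three]
    exact charpoly_fin_three_of_mul_self_eq (by rw [neg_mul_neg, hδsq]) hsum

theorem first_splitting_step
    (A : Matrix (Fin 3) (Fin 3) ℝ) (μ₁ μ₂ μ₃ α δ : ℝ)
    (hsym : (1 / 2 : ℝ) • (A + Aᵀ) = Matrix.diagonal ![μ₂, μ₁, μ₃])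
    (h12 : μ₁ ≤ μ₂) (h23 : μ₂ ≤ μ₃) (hsum : μ₁ + μ₂ + μ₃ = 0)
    (hα : 0 < α) (hμ1 : -α < μ₁) (hμ3 : μ₃ < 2 * α)
    (hδ : δ = Real.sqrt ((α + μ₁) * (α + μ₃)))
    (Ap Am : Matrix (Fin 3) (Fin 3) ℝ)
    (hAp : Ap = !![μ₂, 0, 0; 0, μ₁, 2 * δ; 0, 0, μ₃])
    (hAm : Am = !![μ₂, 0, 0; 0, μ₁, -(2 * δ); 0, 0, μ₃]) :
    A = (1 / 2 : ℝ) • (Ap + (1 / 2 : ℝ) • (A - Aᵀ))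
        + (1 / 2 : ℝ) • (Am + (1 / 2 : ℝ) • (A - Aᵀ)) ∧
    (Ap - Am).rank = 1 ∧
    ((1 / 2 : ℝ) • ((Ap + (1 / 2 : ℝ) • (A - Aᵀ)) + (Ap + (1 / 2 : ℝ) • (A - Aᵀ))ᵀ)).charpoly
      = (X + C α) * (X - C μ₂) * (X - C (α - μ₂)) ∧
    ((1 / 2 : ℝ) • ((Am + (1 / 2 : ℝ) • (A - Aᵀ)) + (Am + (1 / 2 : ℝ) • (A - Aᵀ))ᵀ)).charpoly
      = (X + C α) * (X - C μ₂) * (X - C (α - μ₂)) :=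
  first_splitting_step_general A μ₁ μ₂ μ₃ α δ hsym h12 h23 hsum hμ1 hδ Ap Am hAp hAm
end
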